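/- If a musical interval σ has 𝒩(K^j(σ)) = 2 for some j ∈ ℕ₀, then K^j(σ) = 𝔬; consequently the octave 𝔬 is the unique musical interval of height 0, where the height 𝔥(σ) = min{ℓ ∈ ℕ₀ : K^ℓ(σ) = 𝔬} is well defined for every σ ∈ 𝔖. -/

import Mathlib

/-- The positive rational numbers ℚ₊. -/
abbrev Qpos := {q : ℚ // 0 < q}

/-- Octave equivalence on ℚ₊: `q₁ ∼ q₂` iff `q₁ = 2^n * q₂` for some `n ∈ ℤ`. -/
def octaveRel (q₁ q₂ : Qpos) : Prop := ∃ n : ℤ, (q₁ : ℚ) = 2 ^ n * (q₂ : ℚ)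

/-- The group of musical intervals `𝔖 = ℚ₊/∼`. -/
def MusInt := Quot octaveRel

/-- The musical interval `[q]` represented by a positive rational `q`. -/
def cls (q : ℚ) (h : 0 < q) : MusInt := Quot.mk octaveRel ⟨q, h⟩

/-- The octave `𝔬 = [1/2]`. -/
def octave : MusInt := cls (1/2) (by norm_num)

/-- `repSpec σ (m, n)` says that `(m, n)` is a reduced representative of `σ`,
i.e. `σ = [m/n]`, `1/2 ≤ m/n < 1` and `gcd(n, m) = 1`. -/
def repSpec (σ : MusInt) (p : ℕ × ℕ) : Prop :=
  ∃ h : (0 : ℚ) < (p.1 : ℚ) / (p.2 : ℚ),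
    σ = cls ((p.1 : ℚ) / (p.2 : ℚ)) h ∧
    (1 : ℚ) / 2 ≤ (p.1 : ℚ) / (p.2 : ℚ) ∧ (p.1 : ℚ) / (p.2 : ℚ) < 1 ∧
    Nat.gcd p.2 p.1 = 1

open Classical in
/-- The canonical reduced representative `(m_σ, n_σ)` of a musical interval. -/
noncomputable def rep (σ : MusInt) : ℕ × ℕ :=
  if h : ∃ p, repSpec σ p then h.choose else (1, 2)

/-- The numerator `m_σ`, so that `σ = [m_σ/n_σ]`. -/
noncomputable def mVal (σ : MusInt) : ℕ := (rep σ).1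

/-- The map `𝒩`, sending `σ` to the denominator `n_σ`, so that `σ = [m_σ/n_σ]`. -/
noncomputable def nVal (σ : MusInt) : ℕ := (rep σ).2

/-- The Kepler map `K(σ) = [(n_σ - m_σ)/m_σ]`. -/
noncomputable def kepler (σ : MusInt) : MusInt :=
  if h : (0 : ℚ) < ((nVal σ : ℚ) - (mVal σ : ℚ)) / (mVal σ : ℚ) then
    cls (((nVal σ : ℚ) - (mVal σ : ℚ)) / (mVal σ : ℚ)) h
  else octave

/-- The height `𝔥(σ) = min {ℓ ∈ ℕ₀ : K^ℓ(σ) = 𝔬}`. -/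
noncomputable def height (σ : MusInt) : ℕ := sInf {ℓ : ℕ | kepler^[ℓ] σ = octave}

/-- `n` is an Euclidean Gauss–Wantzel number: `n = 2^k * 3^l * 5^m` with
`l, m ∈ {0, 1}` and `n > 1`. -/
def IsEuclidean (n : ℕ) : Prop :=
  1 < n ∧ ∃ k l m : ℕ, (l = 0 ∨ l = 1) ∧ (m = 0 ∨ m = 1) ∧ n = 2 ^ k * 3 ^ l * 5 ^ m

/-- `p` is a Fermat prime: a prime of the form `2^(2^n) + 1`. -/
def IsFermatPrime (p : ℕ) : Prop := p.Prime ∧ ∃ n : ℕ, p = 2 ^ (2 ^ n) + 1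

/-- `n` is a Gauss–Wantzel number: `n > 1` is a power of `2` times a product of
distinct Fermat primes. -/
def IsGaussWantzel (n : ℕ) : Prop :=
  1 < n ∧ ∃ (k : ℕ) (s : Finset ℕ), (∀ p ∈ s, IsFermatPrime p) ∧ n = 2 ^ k * ∏ p ∈ s, p

/-- `σ` is Euclidean consonant: all members of its second Kepler sequence are
Euclidean Gauss–Wantzel numbers. -/
def EuclideanConsonant (σ : MusInt) : Prop :=
  ∀ j ≤ height σ, IsEuclidean (nVal (kepler^[j] σ))

/-- `σ` is Gaussian consonant: all members of its second Kepler sequence are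
Gauss–Wantzel numbers. -/
def GaussianConsonant (σ : MusInt) : Prop :=
  ∀ j ≤ height σ, IsGaussWantzel (nVal (kepler^[j] σ))

/-! The Kepler map strictly decreases `𝒩` away from the octave: if `σ = [m/n]` is reduced with
`n ≠ 2`, then `n < 2m`, so `K(σ) = [(n-m)/m]` with `(n-m)/m < 1`, and the reduced representative
of such a class has a denominator dividing `m < n`. Iterating, `𝒩` must reach `2`, and the only
reduced fraction in `[1/2, 1)` with denominator `2` is `1/2`. -/

lemma octaveRel_equivalence : Equivalence octaveRel where
  refl _ := ⟨0, by simp⟩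
  symm := by
    rintro a b ⟨n, h⟩
    exact ⟨-n, by rw [h, ← mul_assoc, ← zpow_add₀ two_ne_zero]; simp⟩
  trans := by
    rintro a b c ⟨n, h⟩ ⟨k, h'⟩
    exact ⟨n + k, by rw [h, h', ← mul_assoc, ← zpow_add₀ two_ne_zero]⟩

lemma cls_eq_cls_iff {q₁ q₂ : ℚ} (h₁ : 0 < q₁) (h₂ : 0 < q₂) :
    cls q₁ h₁ = cls q₂ h₂ ↔ ∃ n : ℤ, q₁ = 2 ^ n * q₂ :=
  Quot.eq.trans octaveRel_equivalence.eqvGen_iff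

lemma exists_zpow_mul_mem_Ico {q : ℚ} (hq : 0 < q) :
    ∃ n : ℤ, 1 / 2 ≤ 2 ^ n * q ∧ 2 ^ n * q < 1 := by
  obtain ⟨z, hz₁, hz₂⟩ := exists_mem_Ico_zpow hq one_lt_two
  refine ⟨-(z + 1), ?_, ?_⟩
  · rw [zpow_neg, ← div_eq_inv_mul, le_div_iff₀ (zpow_pos two_pos _), zpow_add₀ two_ne_zero]
    linarith
  · rw [zpow_neg, ← div_eq_inv_mul, div_lt_one (zpow_pos two_pos _)]
    exact hz₂

lemma exists_repSpec (σ : MusInt) : ∃ p, repSpec σ p := by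
  induction σ using Quot.ind with
  | _ q =>
    obtain ⟨q, hq⟩ := q
    obtain ⟨n, hle, hlt⟩ := exists_zpow_mul_mem_Ico hq
    set r := 2 ^ n * q
    have hr : 0 < r := by positivity
    have hnum_nonneg : 0 ≤ r.num := (Rat.num_pos.mpr hr).le
    have hnum : ((r.num.toNat : ℕ) : ℚ) = r.num := by
      exact_mod_cast Int.toNat_of_nonneg hnum_nonneg
    have hcast : ((r.num.toNat : ℕ) : ℚ) / (r.den : ℚ) = r := by
      rw [hnum, Rat.num_div_den]
    refine ⟨(r.num.toNat, r.den), by rwa [hcast], ?_, by rwa [hcast], by rwa [hcast], ?_⟩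
    · refine (cls_eq_cls_iff hq _).mpr ⟨-n, ?_⟩
      rw [hcast, ← mul_assoc, ← zpow_add₀ two_ne_zero]
      simp
    · rw [Nat.gcd_comm, show r.num.toNat = r.num.natAbs by omega]
      exact r.reduced

section RepFacts

variable (σ : MusInt)

lemma repSpec_mVal_nVal : repSpec σ (mVal σ, nVal σ) := by
  rw [mVal, nVal, rep, dif_pos (exists_repSpec σ)]
  exact (exists_repSpec σ).choose_spec

lemma mVal_pos : 0 < mVal σ := by
  obtain ⟨hpos, -⟩ := repSpec_mVal_nVal σ
  refine Nat.pos_of_ne_zero fun h => ?_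
  simp [h] at hpos

lemma nVal_pos : 0 < nVal σ := by
  obtain ⟨hpos, -⟩ := repSpec_mVal_nVal σ
  refine Nat.pos_of_ne_zero fun h => ?_
  simp [h] at hpos

lemma mVal_lt_nVal : mVal σ < nVal σ := by
  obtain ⟨-, -, -, hlt, -⟩ := repSpec_mVal_nVal σ
  rw [div_lt_one (by exact_mod_cast nVal_pos σ)] at hlt
  exact_mod_cast hlt

lemma nVal_le_two_mul_mVal : nVal σ ≤ 2 * mVal σ := by
  obtain ⟨-, -, hle, -, -⟩ := repSpec_mVal_nVal σ
  rw [div_le_div_iff₀ two_pos (by exact_mod_cast nVal_pos σ)] at hle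
  exact_mod_cast (by linarith : (nVal σ : ℚ) ≤ 2 * mVal σ)

lemma coprime_nVal_mVal : (nVal σ).Coprime (mVal σ) :=
  (repSpec_mVal_nVal σ).2.2.2.2

lemma nVal_lt_two_mul_mVal (h : nVal σ ≠ 2) : nVal σ < 2 * mVal σ := by
  refine (nVal_le_two_mul_mVal σ).lt_of_ne fun h2 => h ?_
  have hm : mVal σ = 1 := by
    simpa [h2, Nat.Coprime] using coprime_nVal_mVal σ
  rw [h2, hm]

lemma eq_octave_of_nVal_eq_two (h : nVal σ = 2) : σ = octave := by
  obtain ⟨hpos, hσ, -⟩ := repSpec_mVal_nVal σ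
  have hm : mVal σ = 1 := by have := mVal_pos σ; have := mVal_lt_nVal σ; omega
  rw [hσ]
  exact (cls_eq_cls_iff _ _).mpr ⟨0, by simp [hm, h]⟩

end RepFacts

lemma nVal_cls_dvd {a b : ℕ} (h : 0 < (a : ℚ) / b) (hlt : (a : ℚ) / b < 1) :
    nVal (cls ((a : ℚ) / b) h) ∣ b := by
  set τ := cls ((a : ℚ) / b) h
  obtain ⟨hpos, hτ, hle, -, hcop⟩ := repSpec_mVal_nVal τ
  obtain ⟨w, hw⟩ := (cls_eq_cls_iff hpos h).mp hτ.symm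
  -- `m/n = 2^w · a/b` with `a/b < 1 ≤ 2 · m/n` forces `w ≥ 0`, so `n ∣ m b` and hence `n ∣ b`.
  have hw0 : 0 ≤ w := by
    by_contra! hneg
    have : (2 : ℚ) ^ w ≤ 2 ^ (-1 : ℤ) := zpow_le_zpow_right₀ one_le_two (by omega)
    have : (2 : ℚ) ^ w * (a / b) < 1 / 2 := by
      calc (2 : ℚ) ^ w * (a / b) < 2 ^ (-1 : ℤ) * 1 := by
            apply mul_lt_mul' ‹_› hlt h.le (by positivity)
        _ = 1 / 2 := by norm_num
    linarith
  lift w to ℕ using hw0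
  have hb : (b : ℚ) ≠ 0 := by rintro hb; simp [hb] at h
  have hn : (nVal τ : ℚ) ≠ 0 := by exact_mod_cast (nVal_pos τ).ne'
  rw [zpow_natCast, ← mul_div_assoc, div_eq_div_iff hn hb] at hw
  have hcross : mVal τ * b = 2 ^ w * a * nVal τ := by exact_mod_cast hw
  exact Nat.Coprime.dvd_of_dvd_mul_left hcop ⟨2 ^ w * a, by rw [hcross]; ring⟩

section Kepler

variable (σ : MusInt)

lemma sub_div_mVal_pos : (0 : ℚ) < ((nVal σ - mVal σ : ℕ) : ℚ) / mVal σ := by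
  have := mVal_lt_nVal σ
  have := mVal_pos σ
  apply div_pos <;> exact_mod_cast (by omega)

lemma kepler_eq_cls :
    kepler σ = cls (((nVal σ - mVal σ : ℕ) : ℚ) / mVal σ) (sub_div_mVal_pos σ) := by
  have hsub : ((nVal σ - mVal σ : ℕ) : ℚ) = nVal σ - mVal σ :=
    Nat.cast_sub (mVal_lt_nVal σ).le
  have hpos := sub_div_mVal_pos σ
  rw [hsub] at hpos
  simp only [kepler, dif_pos hpos, hsub]

lemma nVal_kepler_lt (h : nVal σ ≠ 2) : nVal (kepler σ) < nVal σ := by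
  have hlt := nVal_lt_two_mul_mVal σ h
  have hm := mVal_pos σ
  have hratio : ((nVal σ - mVal σ : ℕ) : ℚ) / mVal σ < 1 := by
    rw [div_lt_one (by exact_mod_cast hm)]
    exact_mod_cast (by omega : nVal σ - mVal σ < mVal σ)
  rw [kepler_eq_cls]
  calc _ ≤ mVal σ := Nat.le_of_dvd hm (nVal_cls_dvd _ hratio)
    _ < nVal σ := mVal_lt_nVal σ

lemma exists_iterate_kepler_eq_octave : ∃ ℓ, kepler^[ℓ] σ = octave := by
  induction h : nVal σ using Nat.strong_induction_on generalizing σ with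
  | _ N ih =>
    by_cases h2 : nVal σ = 2
    · exact ⟨0, eq_octave_of_nVal_eq_two σ h2⟩
    · obtain ⟨ℓ, hℓ⟩ := ih _ (h ▸ nVal_kepler_lt σ h2) (kepler σ) rfl
      exact ⟨ℓ + 1, hℓ⟩

lemma height_eq_zero_iff : height σ = 0 ↔ σ = octave := by
  obtain ⟨ℓ, hℓ⟩ := exists_iterate_kepler_eq_octave σ
  rw [height, Nat.sInf_eq_zero, or_iff_left (Set.nonempty_of_mem (x := ℓ) hℓ).ne_empty]
  rfl

end Kepler

/-- if `𝒩(K^j(σ)) = 2` then `K^j(σ) = 𝔬`; the height is well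
defined (the defining set is nonempty for every `σ`), and the octave is the
unique musical interval of height `0`. -/
theorem octave_unique_height_zero :
    (∀ (σ : MusInt) (j : ℕ), nVal (kepler^[j] σ) = 2 → kepler^[j] σ = octave) ∧
    (∀ σ : MusInt, {ℓ : ℕ | kepler^[ℓ] σ = octave}.Nonempty) ∧
    (∀ σ : MusInt, height σ = 0 ↔ σ = octave) :=
  ⟨fun σ j => eq_octave_of_nVal_eq_two (kepler^[j] σ), exists_iterate_kepler_eq_octave,
    height_eq_zero_iff⟩
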